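/- Let γ: [0,1] → ℂⁿ be an absolutely continuous curve with γ(0) = z, γ(1) = w, and |γ(t)| > 1 for all t. Then ∫₀¹ (|γ'(t)| + |Re ⟨γ'(t), γ(t)⟩| / √(|γ(t)|² − 1)) dt ≥ |z − w| + √(|z|² − 1) − √(|w|² − 1). -/

import Mathlib

/-! The Euclidean term is the chord bound `‖∫ γ'‖ ≤ ∫ ‖γ'‖`. For the other term, the curve is
absolutely continuous, and on the compact part of the exterior of the unit ball that it visits
(where `‖x‖` is bounded and `√(‖x‖² - 1)` is bounded away from `0`) the map `x ↦ √(‖x‖² - 1)` is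
Lipschitz. Hence `ψ t = √(‖γ t‖² - 1)` is absolutely continuous, with derivative
`Re ⟪γ, γ'⟫ / ψ` almost everywhere, and the fundamental theorem of calculus for absolutely
continuous functions gives `ψ 0 - ψ 1 ≤ ∫ |ψ'|`. -/

open scoped InnerProductSpace
open MeasureTheory intervalIntegral Set Filter

namespace AbsolutelyContinuousOnInterval

theorem of_dist_le_mul {X Y : Type*} [PseudoMetricSpace X] [PseudoMetricSpace Y]
    {f : ℝ → X} {g : ℝ → Y} {a b K : ℝ} (hf : AbsolutelyContinuousOnInterval f a b)
    (hg : ∀ x ∈ uIcc a b, ∀ y ∈ uIcc a b, dist (g x) (g y) ≤ K * dist (f x) (f y)) :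
    AbsolutelyContinuousOnInterval g a b := by
  unfold AbsolutelyContinuousOnInterval at hf ⊢
  apply squeeze_zero' (Eventually.of_forall fun _ ↦ Finset.sum_nonneg fun _ _ ↦ dist_nonneg)
    ?_ (by simpa using hf.const_mul K)
  rw [eventually_inf_principal]
  filter_upwards with E hE
  rw [Finset.mul_sum]
  gcongr with i hi
  exact hg _ (hE.1 i hi).1 _ (hE.1 i hi).2

theorem sub_le_integral_abs_deriv {f : ℝ → ℝ} {a b : ℝ}
    (hf : AbsolutelyContinuousOnInterval f a b) (hab : a ≤ b) :
    f a - f b ≤ ∫ t in a..b, |deriv f t| := by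
  have h := abs_integral_le_integral_abs (f := deriv f) (μ := volume) hab
  rw [hf.integral_deriv_eq_sub] at h
  linarith [neg_abs_le (f b - f a)]

end AbsolutelyContinuousOnInterval

section Curve

variable {E : Type*} [NormedAddCommGroup E] [NormedSpace ℝ E] {γ γ' : ℝ → E} {a b : ℝ}

theorem absolutelyContinuousOnInterval_of_eq_add_integral (hab : a ≤ b)
    (hγ' : IntervalIntegrable γ' volume a b)
    (hγ : ∀ t ∈ Icc a b, γ t = γ a + ∫ s in a..t, γ' s) :
    AbsolutelyContinuousOnInterval γ a b := by
  refine (hγ'.norm.absolutelyContinuousOnInterval_intervalIntegral left_mem_uIcc).of_dist_le_mul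
    (K := 1) fun x hx y hy ↦ ?_
  have hγ'x := hγ'.mono_set (uIcc_subset_uIcc_left hx)
  have hγ'y := hγ'.mono_set (uIcc_subset_uIcc_left hy)
  rw [uIcc_of_le hab] at hx hy
  rw [one_mul, dist_eq_norm, dist_eq_norm, hγ x hx, hγ y hy, add_sub_add_left_eq_sub,
    integral_interval_sub_left hγ'x hγ'y, integral_interval_sub_left hγ'x.norm hγ'y.norm,
    Real.norm_eq_abs]
  exact norm_integral_le_abs_integral_norm

theorem ae_hasDerivAt_of_eq_add_integral [CompleteSpace E]
    (hγ' : IntervalIntegrable γ' volume a b)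
    (hγ : ∀ t ∈ Icc a b, γ t = γ a + ∫ s in a..t, γ' s) :
    ∀ᵐ t, t ∈ Icc a b → HasDerivAt γ (γ' t) t := by
  have ha : ∀ᵐ t : ℝ, t ≠ a := by simp [ae_iff, measure_singleton]
  have hb : ∀ᵐ t : ℝ, t ≠ b := by simp [ae_iff, measure_singleton]
  filter_upwards [hγ'.ae_hasDerivAt_integral, ha, hb] with t ht hta htb htab
  have hmem : Icc a b ∈ nhds t :=
    Icc_mem_nhds (htab.1.lt_of_ne' hta) (htab.2.lt_of_ne htb)
  exact ((ht (Icc_subset_uIcc htab) a left_mem_uIcc).const_add (γ a)).congr_of_eventuallyEq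
    (eventually_of_mem hmem hγ)

end Curve

theorem abs_sqrt_norm_sq_sub_one_sub_le {E : Type*} [SeminormedAddCommGroup E] {x y : E}
    {M m : ℝ} (hx : ‖x‖ ≤ M) (hy : ‖y‖ ≤ M) (hm : 0 < m) (hmx : m ≤ √(‖x‖ ^ 2 - 1))
    (hmy : m ≤ √(‖y‖ ^ 2 - 1)) :
    |√(‖x‖ ^ 2 - 1) - √(‖y‖ ^ 2 - 1)| ≤ M / m * ‖x - y‖ := by
  set u := √(‖x‖ ^ 2 - 1)
  set v := √(‖y‖ ^ 2 - 1)
  have hu : u ^ 2 = ‖x‖ ^ 2 - 1 := Real.sq_sqrt (Real.sqrt_pos.mp (hm.trans_le hmx)).le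
  have hv : v ^ 2 = ‖y‖ ^ 2 - 1 := Real.sq_sqrt (Real.sqrt_pos.mp (hm.trans_le hmy)).le
  have hnorm : |‖x‖ - ‖y‖| ≤ ‖x - y‖ := abs_norm_sub_norm_le x y
  have hfactor : |u - v| * (u + v) = |‖x‖ - ‖y‖| * (‖x‖ + ‖y‖) := by
    rw [← abs_of_nonneg (by positivity : 0 ≤ u + v),
      ← abs_of_nonneg (by positivity : 0 ≤ ‖x‖ + ‖y‖), ← abs_mul, ← abs_mul]
    congr 1
    linear_combination hu - hv
  rw [div_mul_eq_mul_div, le_div_iff₀ hm]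
  -- `|u - v| * 2m ≤ |u - v| * (u + v) = |‖x‖ - ‖y‖| * (‖x‖ + ‖y‖) ≤ ‖x - y‖ * 2M`
  nlinarith [abs_nonneg (u - v), abs_nonneg (‖x‖ - ‖y‖), norm_nonneg x, norm_nonneg y]

theorem AbsolutelyContinuousOnInterval.sqrt_norm_sq_sub_one {E : Type*}
    [SeminormedAddCommGroup E] {γ : ℝ → E} {a b : ℝ} (hγ : AbsolutelyContinuousOnInterval γ a b)
    (hout : ∀ t ∈ uIcc a b, 1 < ‖γ t‖) :
    AbsolutelyContinuousOnInterval (fun t ↦ √(‖γ t‖ ^ 2 - 1)) a b := by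
  obtain ⟨M, hM⟩ := hγ.exists_bound
  have hcont : ContinuousOn (fun t ↦ √(‖γ t‖ ^ 2 - 1)) (uIcc a b) :=
    ((hγ.continuousOn.norm.pow 2).sub continuousOn_const).sqrt
  obtain ⟨t₀, ht₀, hmin⟩ := isCompact_uIcc.exists_isMinOn nonempty_uIcc hcont
  have hm : 0 < √(‖γ t₀‖ ^ 2 - 1) := Real.sqrt_pos.mpr (by nlinarith [hout t₀ ht₀])
  exact hγ.of_dist_le_mul fun x hx y hy ↦ by
    simpa only [dist_eq_norm, Real.norm_eq_abs] using
      abs_sqrt_norm_sq_sub_one_sub_le (hM x hx) (hM y hy) hm (hmin hx) (hmin hy)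

theorem HasDerivAt.sqrt_norm_sq_sub_one {𝕜 E : Type*} [RCLike 𝕜] [NormedAddCommGroup E]
    [InnerProductSpace 𝕜 E] [NormedSpace ℝ E] {γ : ℝ → E} {v : E} {t : ℝ}
    (hγ : HasDerivAt γ v t) (hout : 1 < ‖γ t‖) :
    HasDerivAt (fun s ↦ √(‖γ s‖ ^ 2 - 1)) (RCLike.re ⟪γ t, v⟫_𝕜 / √(‖γ t‖ ^ 2 - 1)) t := by
  have hsq : HasDerivAt (fun s ↦ ‖γ s‖ ^ 2) (2 * RCLike.re ⟪γ t, v⟫_𝕜) t := by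
    have h := RCLike.reCLM.hasFDerivAt.comp_hasDerivAt t (hγ.inner 𝕜 hγ)
    simp only [Function.comp_def, RCLike.reCLM_apply, inner_self_eq_norm_sq, map_add] at h
    rwa [inner_re_symm (𝕜 := 𝕜) v, ← two_mul] at h
  have hpos : 0 < ‖γ t‖ ^ 2 - 1 := by nlinarith
  convert (hsq.sub_const 1).sqrt hpos.ne' using 1
  field_simp

theorem stmt_7_general {n : ℕ} (γ γ' : ℝ → EuclideanSpace ℂ (Fin n))
    (hγ' : IntervalIntegrable γ' volume 0 1)
    (hFTC : ∀ t ∈ Set.Icc (0 : ℝ) 1, γ t = γ 0 + ∫ s in (0 : ℝ)..t, γ' s)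
    (hout : ∀ t ∈ Set.Icc (0 : ℝ) 1, 1 < ‖γ t‖) :
    ‖γ 0 - γ 1‖ + Real.sqrt (‖γ 0‖ ^ 2 - 1) - Real.sqrt (‖γ 1‖ ^ 2 - 1) ≤
      ∫ t in (0 : ℝ)..1,
        (‖γ' t‖ + |(⟪γ t, γ' t⟫_ℂ).re| / Real.sqrt (‖γ t‖ ^ 2 - 1)) := by
  set ψ : ℝ → ℝ := fun t ↦ √(‖γ t‖ ^ 2 - 1)
  have hψ : AbsolutelyContinuousOnInterval ψ 0 1 :=
    (absolutelyContinuousOnInterval_of_eq_add_integral zero_le_one hγ' hFTC).sqrt_norm_sq_sub_one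
      (by rwa [uIcc_of_le zero_le_one])
  have hderiv : ∀ᵐ t, t ∈ uIoc (0 : ℝ) 1 → |deriv ψ t| = |(⟪γ t, γ' t⟫_ℂ).re| / ψ t := by
    filter_upwards [ae_hasDerivAt_of_eq_add_integral hγ' hFTC] with t ht ht01
    rw [uIoc_of_le zero_le_one] at ht01
    have ht01 := Ioc_subset_Icc_self ht01
    rw [((ht ht01).sqrt_norm_sq_sub_one (𝕜 := ℂ) (hout t ht01)).deriv, abs_div,
      abs_of_nonneg (Real.sqrt_nonneg _)]
    rfl
  have hchord : ‖γ 0 - γ 1‖ ≤ ∫ t in (0 : ℝ)..1, ‖γ' t‖ := by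
    rw [norm_sub_rev, hFTC 1 (by simp), add_sub_cancel_left]
    exact norm_integral_le_integral_norm zero_le_one
  calc ‖γ 0 - γ 1‖ + ψ 0 - ψ 1
      ≤ (∫ t in (0 : ℝ)..1, ‖γ' t‖) + ∫ t in (0 : ℝ)..1, |deriv ψ t| := by
        linarith [hψ.sub_le_integral_abs_deriv zero_le_one]
    _ = ∫ t in (0 : ℝ)..1, (‖γ' t‖ + |deriv ψ t|) :=
        (integral_add hγ'.norm hψ.intervalIntegrable_deriv.abs).symm
    _ = _ := integral_congr_ae (hderiv.mono fun t h ht ↦ by rw [h ht])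

/-- lower bound for the integrated metric on the spherical shell.
An absolutely continuous curve is encoded by an integrable derivative `γ'`
together with the fundamental theorem of calculus identity. -/
theorem stmt_7 {n : ℕ} (γ γ' : ℝ → EuclideanSpace ℂ (Fin n))
    (hγ' : IntervalIntegrable γ' volume 0 1)
    (hFTC : ∀ t ∈ Set.Icc (0 : ℝ) 1, γ t = γ 0 + ∫ s in (0 : ℝ)..t, γ' s)
    (hout : ∀ t ∈ Set.Icc (0 : ℝ) 1, 1 < ‖γ t‖)
    (hint : IntervalIntegrable
      (fun t => ‖γ' t‖ + |(⟪γ t, γ' t⟫_ℂ).re| / Real.sqrt (‖γ t‖ ^ 2 - 1)) volume 0 1) :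
    ‖γ 0 - γ 1‖ + Real.sqrt (‖γ 0‖ ^ 2 - 1) - Real.sqrt (‖γ 1‖ ^ 2 - 1) ≤
      ∫ t in (0 : ℝ)..1,
        (‖γ' t‖ + |(⟪γ t, γ' t⟫_ℂ).re| / Real.sqrt (‖γ t‖ ^ 2 - 1)) :=
  stmt_7_general γ γ' hγ' hFTC hout
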